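/- Let n be coprime to d and X the S_d-orbit of (1,1,...,1,1−d) in (Z/nZ)^d. As y ranges over (Z/nZ)^d, the tuple (ξ_1,...,ξ_{d−1}) with ξ_ℓ = [y] − d·y_ℓ ranges over all of (Z/nZ)^{d−1}; consequently the image of σ_X equals {z_1 + ⋯ + z_{d−1} + 1/(z_1⋯z_{d−1}) : each z_j an n-th root of unity}. -/
import Mathlib


open Finset

/-- `e n z` = exp(2πi·z/n) for `z : ZMod n`. -/
noncomputable def e (n : ℕ) (z : ZMod n) : ℂ :=
  Complex.exp (2 * Real.pi * Complex.I * z.val / n)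

/-- Dot product on `(ZMod n)^d`. -/
def dot {n d : ℕ} (x y : Fin d → ZMod n) : ZMod n := ∑ i, x i * y i

/-- The orbit `S_d · x` of `x` under coordinate permutation, as a `Finset`. -/
noncomputable def orbit (n d : ℕ) (x : Fin d → ZMod n) : Finset (Fin d → ZMod n) :=
  Finset.image (fun π : Equiv.Perm (Fin d) => x ∘ π) Finset.univ

/-- The symmetric supercharacter attached to the orbit of `x`. -/
noncomputable def σ (n d : ℕ) (x y : Fin d → ZMod n) : ℂ :=
  ∑ v ∈ orbit n d x, e n (dot v y)


lemma e_pow' (n : ℕ) (z : ZMod n) :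
    e n z = Complex.exp (2 * Real.pi * Complex.I / n) ^ z.val := by
  rw [e, ← Complex.exp_nat_mul]
  congr 1
  ring

lemma zeta_pow' (n : ℕ) (hn : 0 < n) :
    Complex.exp (2 * Real.pi * Complex.I / n) ^ n = 1 := by
  have hn' : (n : ℂ) ≠ 0 := Nat.cast_ne_zero.mpr hn.ne'
  rw [← Complex.exp_nat_mul]
  have h : (n : ℂ) * (2 * Real.pi * Complex.I / n) = 2 * Real.pi * Complex.I := by
    field_simp
  rw [h, Complex.exp_two_pi_mul_I]

lemma e_zero (n : ℕ) (hn : 0 < n) : e n 0 = 1 := by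
  haveI : NeZero n := ⟨hn.ne'⟩
  rw [e_pow', ZMod.val_zero, pow_zero]

lemma e_add (n : ℕ) (hn : 0 < n) (a b : ZMod n) : e n (a + b) = e n a * e n b := by
  haveI : NeZero n := ⟨hn.ne'⟩
  rw [e_pow', e_pow', e_pow', ZMod.val_add, ← pow_add]
  conv_rhs => rw [← Nat.mod_add_div (a.val + b.val) n]
  rw [pow_add, pow_mul, zeta_pow' n hn, one_pow, mul_one]

lemma e_sum (n : ℕ) (hn : 0 < n) {ι : Type*} (s : Finset ι) (z : ι → ZMod n) :
    e n (∑ j ∈ s, z j) = ∏ j ∈ s, e n (z j) := by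
  classical
  induction s using Finset.cons_induction with
  | empty => simp [e_zero n hn]
  | cons a s ha ih => rw [Finset.sum_cons, Finset.prod_cons, e_add n hn, ih]

lemma e_neg (n : ℕ) (hn : 0 < n) (a : ZMod n) : e n (-a) = (e n a)⁻¹ := by
  refine eq_inv_of_mul_eq_one_left ?_
  rw [← e_add n hn, neg_add_cancel, e_zero n hn]

theorem stmt_19 (n d : ℕ) (hn : 0 < n) (hd : 1 ≤ d) (hcop : Nat.gcd n d = 1)
    (hnd : (1 - (d : ZMod n)) ≠ 1)
    (x : Fin d → ZMod n)
    (hx : x = fun i : Fin d => if (i : ℕ) = d - 1 then 1 - (d : ZMod n) else 1) :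
    Function.Surjective
        (fun y : Fin d → ZMod n => fun ℓ : Fin (d - 1) =>
          (∑ i, y i) - (d : ZMod n) * y ⟨ℓ.1, lt_of_lt_of_le ℓ.2 (Nat.sub_le d 1)⟩) ∧
      Set.range (σ n d x) =
        {w : ℂ | ∃ z : Fin (d - 1) → ZMod n,
          w = (∑ j, e n (z j)) + (∏ j, e n (z j))⁻¹} := by
  haveI : NeZero n := ⟨hn.ne'⟩
  obtain ⟨m, rfl⟩ : ∃ m, d = m + 1 := ⟨d - 1, (Nat.succ_pred_eq_of_pos hd).symm⟩
  set D : ZMod n := ((m + 1 : ℕ) : ZMod n) with hD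
  -- the vectors in the orbit
  set v : Fin (m+1) → Fin (m+1) → ZMod n :=
    fun k i => if i = k then 1 - D else 1 with hv
  have hvinj : Function.Injective v := by
    intro a b hab
    by_contra hne
    have h1 := congrFun hab a
    simp only [hv, if_pos rfl, if_neg hne] at h1
    exact hnd h1
  have horb : orbit n (m+1) x = Finset.image v Finset.univ := by
    unfold orbit
    ext w
    simp only [Finset.mem_image, Finset.mem_univ, true_and]
    constructor
    · rintro ⟨π, rfl⟩
      refine ⟨π.symm (Fin.last m), funext fun i => ?_⟩
      simp only [Function.comp_apply, hx, hv]
      refine if_congr ?_ rfl rfl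
      rw [show ((π i : ℕ) = m + 1 - 1) ↔ π i = Fin.last m by
            simp [Fin.ext_iff, Fin.last]]
      exact (Equiv.apply_eq_iff_eq_symm_apply π).symm
    · rintro ⟨k, rfl⟩
      refine ⟨Equiv.swap k (Fin.last m), funext fun i => ?_⟩
      simp only [Function.comp_apply, hx, hv]
      refine (if_congr ?_ rfl rfl).symm
      rw [show ((Equiv.swap k (Fin.last m) i : ℕ) = m + 1 - 1) ↔
            Equiv.swap k (Fin.last m) i = Fin.last m by
            simp [Fin.ext_iff, Fin.last]]
      rw [Equiv.apply_eq_iff_eq_symm_apply, Equiv.symm_swap, Equiv.swap_apply_right]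
  have hdot : ∀ (k : Fin (m+1)) (y : Fin (m+1) → ZMod n),
      dot (v k) y = (∑ i, y i) - D * y k := by
    intro k y
    unfold dot
    have h : ∀ i : Fin (m+1), v k i * y i = y i - (if i = k then D * y i else 0) := by
      intro i
      by_cases h : i = k
      · subst h
        simp [hv]
        ring
      · simp [hv, h]
    rw [Finset.sum_congr rfl (fun i _ => h i), Finset.sum_sub_distrib]
    simp
  have hsig : ∀ y, σ n (m+1) x y = ∑ k : Fin (m+1), e n ((∑ i, y i) - D * y k) := by
    intro y
    unfold σ
    rw [horb, Finset.sum_image (fun a _ b _ h => hvinj h)]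
    exact Finset.sum_congr rfl fun k _ => by rw [hdot]
  -- F is the map appearing in the statement (up to defeq)
  set F : (Fin (m+1) → ZMod n) → Fin m → ZMod n :=
    fun y ℓ => (∑ i, y i) - D * y (Fin.castSucc ℓ) with hF
  -- the key identity
  have key : ∀ y, σ n (m+1) x y = (∑ j : Fin m, e n (F y j)) + (∏ j : Fin m, e n (F y j))⁻¹ := by
    intro y
    rw [hsig, Fin.sum_univ_castSucc (f := fun k : Fin (m+1) => e n ((∑ i, y i) - D * y k))]
    congr 1
    have hsum0 : ∑ k : Fin (m+1), ((∑ i, y i) - D * y k) = 0 := by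
      rw [Finset.sum_sub_distrib, Finset.sum_const, Finset.card_univ, Fintype.card_fin,
        ← Finset.mul_sum, nsmul_eq_mul]
      rw [show ((m + 1 : ℕ) : ZMod n) = D from hD.symm]
      ring
    have h2 := Fin.sum_univ_castSucc (f := fun k : Fin (m+1) => (∑ i, y i) - D * y k)
    rw [hsum0] at h2
    have hlast : (∑ i, y i) - D * y (Fin.last m) = -(∑ j : Fin m, F y j) :=
      eq_neg_of_add_eq_zero_right h2.symm
    rw [hlast, e_neg n hn, e_sum n hn]
  -- surjectivity
  have hdinv : IsUnit D := by
    rw [hD, ZMod.isUnit_iff_coprime]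
    exact (Nat.coprime_comm.mp hcop)
  obtain ⟨c, hc⟩ := hdinv.exists_left_inv
  have hsurj : Function.Surjective F := by
    intro ξ
    refine ⟨Fin.snoc (fun ℓ => -(c * ξ ℓ)) (c * ∑ ℓ, ξ ℓ), funext fun ℓ => ?_⟩
    have hS : (∑ i, Fin.snoc (fun ℓ => -(c * ξ ℓ)) (c * ∑ ℓ, ξ ℓ) i) = 0 := by
      rw [Fin.sum_univ_castSucc]
      simp [Finset.sum_neg_distrib, ← Finset.mul_sum]
    simp only [hF, hS, Fin.snoc_castSucc, zero_sub, mul_neg, neg_neg, ← mul_assoc]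
    rw [mul_comm D c, hc, one_mul]
  constructor
  · -- part 1
    intro ξ
    obtain ⟨y, hy⟩ := hsurj ξ
    exact ⟨y, hy⟩
  · ext w
    simp only [Set.mem_range, Set.mem_setOf_eq]
    constructor
    · rintro ⟨y, rfl⟩
      refine ⟨F y, ?_⟩
      show σ n (m+1) x y = (∑ j : Fin m, e n (F y j)) + (∏ j : Fin m, e n (F y j))⁻¹
      exact key y
    · rintro ⟨z, rfl⟩
      obtain ⟨y, rfl⟩ := hsurj z
      refine ⟨y, ?_⟩
      show σ n (m+1) x y = (∑ j : Fin m, e n (F y j)) + (∏ j : Fin m, e n (F y j))⁻¹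
      exact key y
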